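/- Let u₀, v₀: ℝ² → ℝ be the unique functions such that for each (x,y), (u,v) = (u₀(x,y), v₀(x,y)) satisfies v² + y² = (x²+u²)², vu + yx = 0, vx − yu ≥ 0. Then u₀(0,y) = −y|y|^{−1/2} for y ≠ 0 (equivalently u₀(0,y)⁴ = y² with sign opposite to y), and v₀(x,0) = x|x| for all x. -/

import Mathlib

/-!
On the axis `x = 0` the equation `v u = 0` forces `v = 0` (`u = 0` would give `v = y = 0`), so
`u² = |y|`, and `-y u ≥ 0` picks the sign of the root. On the axis `y = 0` it forces `u = 0`
(`v = 0` would give `x = u = 0`), so `v² = x⁴`, and `v x ≥ 0` picks the sign.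
-/

def HarveyLawsonSystem (x y u v : ℝ) : Prop :=
  v ^ 2 + y ^ 2 = (x ^ 2 + u ^ 2) ^ 2 ∧ v * u + y * x = 0 ∧ v * x - y * u ≥ 0

lemma eq_of_sq_eq_of_mul_nonneg_of_mul_pos {a b c : ℝ} (h : a ^ 2 = b ^ 2) (ha : 0 ≤ a * c)
    (hb : 0 < b * c) : a = b := by
  rcases sq_eq_sq_iff_eq_or_eq_neg.mp h with rfl | rfl
  · rfl
  · linarith [neg_mul b c]

lemma sq_neg_mul_abs_rpow_neg_half (y : ℝ) : (-y * |y| ^ (-(1 : ℝ) / 2)) ^ 2 = |y| := by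
  rcases eq_or_ne y 0 with rfl | hy
  · simp
  have hpos : 0 < |y| := abs_pos.mpr hy
  rw [neg_mul, neg_sq, mul_pow, ← sq_abs y, ← Real.rpow_mul_natCast hpos.le]
  rw [show (-(1 : ℝ) / 2 * (2 : ℕ)) = -1 by norm_num, Real.rpow_neg_one]
  field_simp

lemma eq_neg_mul_abs_rpow_of_sq_eq_abs {y u : ℝ} (hy : y ≠ 0) (hu : u ^ 2 = |y|)
    (hyu : y * u ≤ 0) : u = -y * |y| ^ (-(1 : ℝ) / 2) := by
  refine eq_of_sq_eq_of_mul_nonneg_of_mul_pos (c := -y) ?_ (by linarith [mul_comm y u]) ?_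
  · rw [hu, sq_neg_mul_abs_rpow_neg_half]
  · have : 0 < |y| ^ (-(1 : ℝ) / 2) := Real.rpow_pos_of_pos (abs_pos.mpr hy) _
    nlinarith [mul_self_pos.mpr hy]

lemma eq_mul_abs_of_sq_eq_of_mul_nonneg {x v : ℝ} (hv : v ^ 2 = x ^ 4) (hvx : 0 ≤ v * x) :
    v = x * |x| := by
  rcases eq_or_ne x 0 with rfl | hx
  · simpa using hv
  refine eq_of_sq_eq_of_mul_nonneg_of_mul_pos (hv.trans ?_) hvx ?_
  · rw [mul_pow, sq_abs]; ring
  · have := abs_pos.mpr hx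
    nlinarith [mul_self_pos.mpr hx]

namespace HarveyLawsonSystem

variable {x y u v : ℝ}

lemma sq_u_eq_abs_of_x_eq_zero (h : HarveyLawsonSystem 0 y u v) (hy : y ≠ 0) :
    u ^ 2 = |y| ∧ y * u ≤ 0 := by
  obtain ⟨hnorm, hprod, hsign⟩ := h
  simp only [mul_zero, add_zero, zero_pow two_ne_zero, zero_add, zero_sub] at hnorm hprod hsign
  have hu : u ≠ 0 := by
    rintro rfl
    exact hy (pow_eq_zero_iff two_ne_zero |>.mp (by nlinarith [sq_nonneg v, sq_nonneg y]))
  have hv : v = 0 := (mul_eq_zero.mp hprod).resolve_right hu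
  subst hv
  refine ⟨?_, by linarith⟩
  rw [← abs_of_nonneg (sq_nonneg u)]
  exact (sq_eq_sq_iff_abs_eq_abs _ _).mp (by linarith [pow_mul u 2 2])

lemma sq_v_eq_pow_four_of_y_eq_zero (h : HarveyLawsonSystem x 0 u v) :
    v ^ 2 = x ^ 4 ∧ 0 ≤ v * x := by
  obtain ⟨hnorm, hprod, hsign⟩ := h
  simp only [zero_mul, add_zero, zero_pow two_ne_zero, sub_zero] at hnorm hprod hsign
  refine ⟨?_, hsign⟩
  rcases mul_eq_zero.mp hprod with rfl | rfl
  · have := pow_le_pow_left₀ (sq_nonneg x) (le_add_of_nonneg_right (sq_nonneg u)) 2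
    nlinarith [pow_nonneg (sq_nonneg x) 2]
  · rw [hnorm]; ring

end HarveyLawsonSystem

theorem harvey_lawson_values (u₀ v₀ : ℝ → ℝ → ℝ)
    (hsys : ∀ x y : ℝ,
      (v₀ x y) ^ 2 + y ^ 2 = (x ^ 2 + (u₀ x y) ^ 2) ^ 2 ∧
      v₀ x y * u₀ x y + y * x = 0 ∧
      v₀ x y * x - y * u₀ x y ≥ 0) :
    (∀ y : ℝ, y ≠ 0 → u₀ 0 y = -y * |y| ^ (-(1 : ℝ) / 2)) ∧
    (∀ x : ℝ, v₀ x 0 = x * |x|) := by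
  refine ⟨fun y hy => ?_, fun x => ?_⟩
  · obtain ⟨hu, hyu⟩ := HarveyLawsonSystem.sq_u_eq_abs_of_x_eq_zero (hsys 0 y) hy
    exact eq_neg_mul_abs_rpow_of_sq_eq_abs hy hu hyu
  · obtain ⟨hv, hvx⟩ := HarveyLawsonSystem.sq_v_eq_pow_four_of_y_eq_zero (hsys x 0)
    exact eq_mul_abs_of_sq_eq_of_mul_nonneg hv hvx
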